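/- arXiv:2410.23505 — 4 statements merged into one kernel-verified Lean document; each statement's English description precedes it below -/
import Mathlib

section
/- Let d ≥ 2 be an integer, 1 ≤ p ≤ 2, and R > 0. Let m : [0,∞) → ℂ be integrable, and for n ∈ ℤ define b_n : [−1/2, 1/2] → ℂ by b_n(t) = R m̂(R(t+n)), where m̂ is extended evenly to ℝ. Then there is a constant C = C(p,d), independent of m and R, such that ( Σ_{n∈ℤ, n≠0} [ ⟨Rn⟩^{α(p)} ‖b_n‖_{L^p([−1/2,1/2])} ]^p )^{1/p} ≤ C R^{1/p'} C_p(m). -/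
open MeasureTheory Real Set Filter
open scoped ENNReal

noncomputable section

/-- The cosine transform of a function `m : [0,∞) → ℂ`. -/
def cosT (m : ℝ → ℂ) (t : ℝ) : ℂ :=
  ∫ l in Set.Ioi (0 : ℝ), m l * (Real.cos (2 * Real.pi * l * t) : ℂ)

/-- The even extension of the cosine transform to all of `ℝ`. -/
def cosTE (m : ℝ → ℂ) (t : ℝ) : ℂ := cosT m |t|

/-- The Japanese bracket `⟨t⟩ = (1 + t²)^{1/2}`. -/
def jap (t : ℝ) : ℝ := (1 + t ^ 2) ^ ((1 : ℝ) / 2)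

/-- `α(p) = (d−1)(1/p − 1/2)`. -/
def alphaP (d : ℕ) (p : ℝ) : ℝ := ((d : ℝ) - 1) * (1 / p - 1 / 2)

/-- `C_p(m) = ( ∫₀^∞ [ ⟨t⟩^{α(p)} |m̂(t)| ]^p dt )^{1/p}`, as an extended real. -/
def Cp (d : ℕ) (p : ℝ) (m : ℝ → ℂ) : ℝ≥0∞ :=
  (∫⁻ t in Set.Ioi (0 : ℝ),
      ENNReal.ofReal ((jap t ^ alphaP d p * ‖cosT m t‖) ^ p)) ^ (1 / p)

/-!
For `n ≠ 0` and `s ∈ R (n + [-1/2, 1/2])` we have `|R n| ≤ 2 |s|`, hence `⟨R n⟩^α ≤ 2^α ⟨s⟩^α`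
because `α ≥ 0` when `p ≤ 2`. After the substitution `s = R (t + n)` the `n`-th term is thus at most
`2^{αp} R^{p-1} ∫_{R (n + [-1/2, 1/2])} (⟨s⟩^α |m̂(s)|)^p ds`. These intervals tile `ℝ`, and the
integrand is even, so the sum is at most `2^{αp+1} R^{p-1} C_p(m)^p`.
-/

lemma alphaP_nonneg {d : ℕ} (hd : 1 ≤ d) {p : ℝ} (hp : 0 < p) (hp2 : p ≤ 2) :
    0 ≤ alphaP d p :=
  mul_nonneg (sub_nonneg.2 (by exact_mod_cast hd))
    (sub_nonneg.2 (one_div_le_one_div_of_le hp hp2))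

lemma jap_pos (t : ℝ) : 0 < jap t := Real.rpow_pos_of_pos (by positivity) _

lemma jap_le_two_mul_jap {x y : ℝ} (h : |x| ≤ 2 * |y|) : jap x ≤ 2 * jap y := by
  have hsq : 1 + x ^ 2 ≤ 2 ^ 2 * (1 + y ^ 2) := by
    nlinarith [sq_abs x, sq_abs y, abs_nonneg x, mul_self_le_mul_self (abs_nonneg x) h]
  calc jap x ≤ (2 ^ 2 * (1 + y ^ 2)) ^ ((1 : ℝ) / 2) := by
        unfold jap; gcongr
    _ = 2 * jap y := by
        rw [jap, Real.mul_rpow (by positivity) (by positivity), ← Real.sqrt_eq_rpow,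
          Real.sqrt_sq zero_le_two]

lemma jap_rpow_le_of_abs_le {α : ℝ} (hα : 0 ≤ α) {x y : ℝ} (h : |x| ≤ 2 * |y|) :
    jap x ^ α ≤ 2 ^ α * jap |y| ^ α := by
  rw [← Real.mul_rpow zero_le_two (jap_pos _).le]
  gcongr
  · exact (jap_pos _).le
  · simpa [jap] using jap_le_two_mul_jap h

lemma abs_mul_intCast_le_two_mul_abs {R t : ℝ} (hR : 0 ≤ R) (ht : |t| ≤ 1 / 2) {n : ℤ}
    (hn : n ≠ 0) : |R * n| ≤ 2 * |R * (t + n)| := by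
  have hn1 : (1 : ℝ) ≤ |(n : ℝ)| := by exact_mod_cast Int.one_le_abs hn
  have htn : |(n : ℝ)| - |t| ≤ |t + n| := by
    simpa [add_comm] using abs_sub_abs_le_abs_add (n : ℝ) t
  rw [abs_mul, abs_mul, abs_of_nonneg hR]
  nlinarith [mul_le_mul_of_nonneg_left htn hR]

lemma Real.lintegral_comp_mul_left (f : ℝ → ℝ≥0∞) {R : ℝ} (hR : R ≠ 0) :
    ∫⁻ x, f (R * x) = ENNReal.ofReal |R⁻¹| * ∫⁻ x, f x := by
  rw [← (measurableEmbedding_mulLeft₀ hR).lintegral_map, Real.map_volume_mul_left hR,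
    lintegral_smul_measure, smul_eq_mul]

lemma lintegral_eq_tsum_Ioc_add_intCast (f : ℝ → ℝ≥0∞) (a : ℝ) :
    ∫⁻ x, f x = ∑' n : ℤ, ∫⁻ t in Ioc a (a + 1), f (t + n) := by
  rw [← setLIntegral_univ, ← iUnion_Ioc_add_intCast a,
    lintegral_iUnion (fun _ => measurableSet_Ioc) (pairwise_disjoint_Ioc_add_intCast a)]
  refine tsum_congr fun n => ?_
  rw [← (measurePreserving_add_right volume (n : ℝ)).setLIntegral_comp_preimage_emb
    (measurableEmbedding_addRight _), preimage_add_const_Ioc]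
  simp only [add_sub_cancel_right, add_right_comm a (n : ℝ) 1]

lemma lintegral_comp_abs (f : ℝ → ℝ≥0∞) :
    ∫⁻ x, f |x| = 2 * ∫⁻ x in Ioi 0, f x := by
  have hpos : ∫⁻ x in Ioi 0, f |x| = ∫⁻ x in Ioi 0, f x :=
    setLIntegral_congr_fun measurableSet_Ioi fun x hx => by rw [abs_of_pos hx]
  have hneg : ∫⁻ x in Iio 0, f |x| = ∫⁻ x in Ioi 0, f x := by
    rw [← hpos, ← (Measure.measurePreserving_neg volume).setLIntegral_comp_preimage_emb
      (Homeomorph.neg ℝ).measurableEmbedding]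
    simp
  rw [← lintegral_add_compl _ measurableSet_Iio, compl_Iio,
    setLIntegral_congr Ioi_ae_eq_Ici.symm, hneg, hpos, two_mul]

lemma eLpNorm_ofReal_rpow_eq_lintegral {α E : Type*} [MeasurableSpace α] {μ : Measure α}
    [NormedAddCommGroup E] (f : α → E) {p : ℝ} (hp : 0 < p) :
    eLpNorm f (ENNReal.ofReal p) μ ^ p = ∫⁻ x, ‖f x‖ₑ ^ p ∂μ := by
  have := eLpNorm_nnreal_pow_eq_lintegral (f := f) (μ := μ) (p := p.toNNReal) (by simpa using hp)
  rwa [Real.coe_toNNReal _ hp.le] at this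

lemma tsum_setLIntegral_Icc_comp_mul_le (f : ℝ → ℝ≥0∞) {R : ℝ} (hR : 0 < R) :
    ∑' n : {n : ℤ // n ≠ 0}, ∫⁻ t in Icc (-(1 : ℝ) / 2) (1 / 2), f (R * (t + (n : ℤ))) ≤
      ENNReal.ofReal R⁻¹ * ∫⁻ x, f x := by
  calc _ ≤ ∑' n : ℤ, ∫⁻ t in Icc (-(1 : ℝ) / 2) (1 / 2), f (R * (t + n)) :=
        ENNReal.tsum_comp_le_tsum_of_injective Subtype.val_injective _
    _ = ∫⁻ x, f (R * x) := by
        rw [lintegral_eq_tsum_Ioc_add_intCast _ (-(1 : ℝ) / 2),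
          show -(1 : ℝ) / 2 + 1 = 1 / 2 by norm_num]
        exact tsum_congr fun n => setLIntegral_congr Ioc_ae_eq_Icc.symm
    _ = _ := by rw [Real.lintegral_comp_mul_left f hR.ne', abs_of_pos (inv_pos.2 hR)]

-- The integrand of `Cp`, with `α = alphaP d p`.
def weightedCosTPow (α p : ℝ) (m : ℝ → ℂ) (t : ℝ) : ℝ≥0∞ :=
  ENNReal.ofReal ((jap t ^ α * ‖cosT m t‖) ^ p)

lemma jap_mul_eLpNorm_rpow_le {α p R : ℝ} (hα : 0 ≤ α) (hp : 0 < p) (hR : 0 < R)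
    (m : ℝ → ℂ) {n : ℤ} (hn : n ≠ 0) :
    (ENNReal.ofReal (jap (R * n) ^ α) *
        eLpNorm (fun t : ℝ => (R : ℂ) * cosTE m (R * (t + n))) (ENNReal.ofReal p)
          (volume.restrict (Icc (-(1 : ℝ) / 2) (1 / 2)))) ^ p ≤
      ENNReal.ofReal (2 ^ α * R) ^ p *
        ∫⁻ t in Icc (-(1 : ℝ) / 2) (1 / 2), weightedCosTPow α p m |R * (t + n)| := by
  rw [ENNReal.mul_rpow_of_nonneg _ _ hp.le, eLpNorm_ofReal_rpow_eq_lintegral _ hp,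
    ← lintegral_const_mul' _ _ (by finiteness), ← lintegral_const_mul' _ _ (by finiteness)]
  refine setLIntegral_mono' measurableSet_Icc fun t ht => ?_
  have ht' : |t| ≤ 1 / 2 := abs_le.mpr ⟨by linarith [ht.1], ht.2⟩
  have hjap := jap_rpow_le_of_abs_le hα (abs_mul_intCast_le_two_mul_abs hR.le ht' hn)
  rw [← ENNReal.mul_rpow_of_nonneg _ _ hp.le, weightedCosTPow,
    ← ENNReal.ofReal_rpow_of_nonneg
      (mul_nonneg (Real.rpow_nonneg (jap_pos _).le _) (norm_nonneg _)) hp.le,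
    ← ENNReal.mul_rpow_of_nonneg _ _ hp.le, ← ofReal_norm,
    ← ENNReal.ofReal_mul (Real.rpow_nonneg (jap_pos _).le _), ← ENNReal.ofReal_mul (by positivity)]
  refine ENNReal.rpow_le_rpow (ENNReal.ofReal_le_ofReal ?_) hp.le
  rw [norm_mul, Complex.norm_real, Real.norm_of_nonneg hR.le]
  calc jap (R * n) ^ α * (R * ‖cosTE m (R * (t + n))‖)
      ≤ 2 ^ α * jap |R * (t + n)| ^ α * (R * ‖cosTE m (R * (t + n))‖) := by gcongr
    _ = 2 ^ α * R * (jap |R * (t + n)| ^ α * ‖cosT m |R * (t + n)|‖) := by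
        rw [cosTE]; ring

lemma tsum_jap_mul_eLpNorm_rpow_le {α p R : ℝ} (hα : 0 ≤ α) (hp : 0 < p) (hR : 0 < R)
    (m : ℝ → ℂ) :
    ∑' n : {n : ℤ // n ≠ 0}, (ENNReal.ofReal (jap (R * (n : ℤ)) ^ α) *
        eLpNorm (fun t : ℝ => (R : ℂ) * cosTE m (R * (t + (n : ℤ)))) (ENNReal.ofReal p)
          (volume.restrict (Icc (-(1 : ℝ) / 2) (1 / 2)))) ^ p ≤
      ENNReal.ofReal (2 ^ α * R) ^ p * ENNReal.ofReal (2 * R⁻¹) *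
        ∫⁻ t in Ioi 0, weightedCosTPow α p m t :=
  calc _ ≤ ∑' n : {n : ℤ // n ≠ 0}, ENNReal.ofReal (2 ^ α * R) ^ p *
          ∫⁻ t in Icc (-(1 : ℝ) / 2) (1 / 2), weightedCosTPow α p m |R * (t + (n : ℤ))| :=
        ENNReal.tsum_le_tsum fun n => jap_mul_eLpNorm_rpow_le hα hp hR m n.2
    _ ≤ ENNReal.ofReal (2 ^ α * R) ^ p *
          (ENNReal.ofReal R⁻¹ * ∫⁻ x, weightedCosTPow α p m |x|) := by
        rw [ENNReal.tsum_mul_left]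
        gcongr
        exact tsum_setLIntegral_Icc_comp_mul_le (fun x => weightedCosTPow α p m |x|) hR
    _ = _ := by
        rw [lintegral_comp_abs, ENNReal.ofReal_mul zero_le_two, ENNReal.ofReal_ofNat]
        ring

/-- For `d ≥ 2`, `1 ≤ p ≤ 2`: with `b_n(t) = R m̂(R(t+n))` on `[−1/2,1/2]`, one has
`( Σ_{n≠0} [ ⟨Rn⟩^{α(p)} ‖b_n‖_{L^p([−1/2,1/2])} ]^p )^{1/p} ≤ C R^{1/p'} C_p(m)`
with `C = C(p,d)` independent of `m` and `R`. -/
theorem statement5 (d : ℕ) (hd : 2 ≤ d) (p : ℝ) (hp1 : 1 ≤ p) (hp2 : p ≤ 2) :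
    ∃ C : ℝ, 0 < C ∧
      ∀ R : ℝ, 0 < R →
        ∀ m : ℝ → ℂ, IntegrableOn m (Set.Ici 0) →
          (∑' n : {n : ℤ // n ≠ 0},
              (ENNReal.ofReal (jap (R * ((n : ℤ) : ℝ)) ^ alphaP d p) *
                eLpNorm (fun t : ℝ => (R : ℂ) * cosTE m (R * (t + ((n : ℤ) : ℝ))))
                  (ENNReal.ofReal p)
                  (volume.restrict (Set.Icc (-(1 : ℝ) / 2) (1 / 2)))) ^ p) ^ (1 / p) ≤
            ENNReal.ofReal (C * R ^ (1 - 1 / p)) * Cp d p m := by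
  have hp : 0 < p := by linarith
  have hα := alphaP_nonneg (d := d) (by omega) hp hp2
  refine ⟨2 ^ alphaP d p * 2 ^ (1 / p), by positivity, fun R hR m _ => ?_⟩
  have hp' : 0 ≤ 1 / p := by positivity
  refine (ENNReal.rpow_le_rpow (tsum_jap_mul_eLpNorm_rpow_le hα hp hR m) hp').trans_eq ?_
  rw [ENNReal.mul_rpow_of_nonneg _ _ hp', ENNReal.mul_rpow_of_nonneg _ _ hp', ← ENNReal.rpow_mul,
    mul_one_div_cancel hp.ne', ENNReal.rpow_one, ENNReal.ofReal_rpow_of_nonneg (by positivity) hp',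
    ← ENNReal.ofReal_mul (by positivity)]
  congr 2
  rw [Real.mul_rpow zero_le_two (inv_nonneg.2 hR.le), Real.inv_rpow hR.le, Real.rpow_sub hR,
    Real.rpow_one]
  ring
end
end

section
/- Let m : [0,∞) → ℂ be regulated, bounded, and integrable, and suppose its cosine transform m̂ is integrable on (0,∞); extend m̂ evenly to ℝ. Fix R > 0 and define the periodization b_R(t) = Σ_{n∈ℤ} R m̂(R(t+n)) for t ∈ [−1/2, 1/2] (the series converges absolutely for a.e. t and defines an integrable function on [−1/2,1/2]). Then for every k ∈ ℤ, ∫_{−1/2}^{1/2} b_R(t) e^{−2πikt} dt = m(|k|/R) / 2. -/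
/-
Write `mₑ x = m |x|`. Its Fourier transform is `2 m̂`, which is integrable, so Fourier inversion
`mₑ = 𝓕⁻ (𝓕 mₑ)` holds almost everywhere (test both sides against smooth compactly supported
`φ = 𝓕 (𝓕⁻ φ)` and move `𝓕` across twice). The right side is continuous and `m` is regulated,
so the averages defining regularity force equality at every point of `[0,∞)`:
`m λ = 2 𝓕 m̂ λ`.

On the other side, `b_R` is the 1-periodization of the integrable function `t ↦ R m̂ (R t)`.
By Tonelli the series converges absolutely a.e. on a period, and since `e^{-2πikt}` is
1-periodic, integrating `b_R e^{-2πikt}` over one period unfolds to the Fourier transform of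
`R m̂ (R ·)` at `k`, which is `𝓕 m̂ (k / R) = m (|k| / R) / 2`.
-/

open MeasureTheory Real Set Filter
open scoped ENNReal

noncomputable section

/-- `m : [0,∞) → ℂ` is regulated. -/
def Regulated (m : ℝ → ℂ) : Prop :=
  ∀ l₀ : ℝ, 0 ≤ l₀ →
    Filter.Tendsto (fun δ : ℝ => ⨍ l in {l : ℝ | 0 ≤ l ∧ |l - l₀| ≤ δ}, m l)
      (nhdsWithin 0 (Set.Ioi 0)) (nhds (m l₀))

open scoped FourierTransform SchwartzMap Topology

section EvenFunction

theorem Function.Even.apply_abs {β : Type*} {f : ℝ → β} (hf : f.Even) (y : ℝ) :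
    f |y| = f y := by
  rcases abs_choice y with h | h <;> rw [h]
  exact hf y

variable {E : Type*} [NormedAddCommGroup E] {f : ℝ → E}

theorem Function.Even.integrable_of_integrableOn_Ioi (hf : f.Even)
    (h : IntegrableOn f (Ioi 0)) : Integrable f := by
  have hIic : IntegrableOn f (Iic 0) := by
    have e : MeasurableEmbedding fun x : ℝ => -x := (Homeomorph.neg ℝ).measurableEmbedding
    rw [← Measure.map_neg_eq_self (volume : Measure ℝ), e.integrableOn_map_iff]
    simpa [Function.comp_def, hf _] using (integrableOn_Ici_iff_integrableOn_Ioi).mpr h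
  simpa using hIic.union h

theorem integral_eq_integral_Ioi_add_comp_neg [NormedSpace ℝ E] (hf : Integrable f) :
    ∫ x, f x = ∫ x in Ioi 0, (f x + f (-x)) := by
  rw [integral_add hf.integrableOn hf.comp_neg.integrableOn, integral_comp_neg_Ioi, neg_zero,
    add_comm, ← setIntegral_union (Iic_disjoint_Ioi le_rfl) measurableSet_Ioi hf.integrableOn
      hf.integrableOn, Iic_union_Ioi, Measure.restrict_univ]

end EvenFunction

section FourierTransform

variable {V : Type*} [NormedAddCommGroup V] [InnerProductSpace ℝ V] [MeasurableSpace V]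
  [BorelSpace V] [FiniteDimensional ℝ V]

theorem MeasureTheory.Integrable.integral_fourier_mul_eq {f g : V → ℂ} (hf : Integrable f)
    (hg : Integrable g) :
    ∫ ξ, 𝓕 f ξ * g ξ = ∫ x, f x * 𝓕 g x := by
  have := VectorFourier.integral_bilin_fourierIntegral_eq_flip (ContinuousLinearMap.mul ℂ ℂ)
    (L := innerₗ V) Real.continuous_fourierChar continuous_inner hf hg
  rwa [flip_innerₗ] at this

theorem MeasureTheory.Integrable.integral_fourierInv_mul_eq {f g : V → ℂ} (hf : Integrable f)
    (hg : Integrable g) :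
    ∫ ξ, 𝓕⁻ f ξ * g ξ = ∫ x, f x * 𝓕⁻ g x := by
  have := VectorFourier.integral_bilin_fourierIntegral_eq_flip (ContinuousLinearMap.mul ℂ ℂ)
    (L := -innerₗ V) Real.continuous_fourierChar continuous_inner.neg hf hg
  rwa [show (-innerₗ V).flip = -innerₗ V from
    LinearMap.ext₂ fun x y => by simp [real_inner_comm]] at this

theorem MeasureTheory.Integrable.continuous_fourierInv {E : Type*} [NormedAddCommGroup E]
    [NormedSpace ℂ E] {f : V → E} (hf : Integrable f) : Continuous (𝓕⁻ f) :=
  VectorFourier.fourierIntegral_continuous Real.continuous_fourierChar continuous_inner.neg hf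

theorem MeasureTheory.Integrable.ae_eq_fourierInv_fourier {f : V → ℂ} (hf : Integrable f)
    (hf' : Integrable (𝓕 f)) : f =ᵐ[volume] 𝓕⁻ (𝓕 f) := by
  refine ae_eq_of_integral_contDiff_smul_eq hf.locallyIntegrable
    hf'.continuous_fourierInv.locallyIntegrable fun φ hφ hφc => ?_
  let φS : 𝓢(V, ℂ) := (hφc.comp_left Complex.ofReal_zero).toSchwartzMap
    (Complex.ofRealCLM.contDiff.comp hφ)
  have hφS : ∀ x, φS x = φ x := fun x => rfl
  calc ∫ x, φ x • f x = ∫ x, f x * 𝓕 (𝓕⁻ φS) x := by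
        simp [FourierTransform.fourier_fourierInv_eq, hφS, mul_comm]
    _ = ∫ ξ, 𝓕 f ξ * 𝓕⁻ φS ξ := by
        rw [SchwartzMap.fourier_coe]
        exact (hf.integral_fourier_mul_eq (𝓕⁻ φS).integrable).symm
    _ = ∫ x, 𝓕⁻ (𝓕 f) x * φS x := by
        rw [SchwartzMap.fourierInv_coe]
        exact (hf'.integral_fourierInv_mul_eq φS.integrable).symm
    _ = ∫ x, φ x • 𝓕⁻ (𝓕 f) x := by simp [hφS, mul_comm]

theorem fourier_const_mul_comp_mul_left {f : ℝ → ℂ} {R : ℝ} (hR : 0 < R) (w : ℝ) :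
    𝓕 (fun t => (R : ℂ) * f (R * t)) w = 𝓕 f (w / R) := by
  set g : ℝ → ℂ := fun u => Complex.exp (↑(-2 * π * u * (w / R)) * Complex.I) * f u
  have hsub := Measure.integral_comp_mul_left g R
  rw [abs_of_pos (inv_pos.mpr hR), Complex.real_smul] at hsub
  simp only [Real.fourier_real_eq_integral_exp_smul, smul_eq_mul]
  calc ∫ t, Complex.exp (↑(-2 * π * t * w) * Complex.I) * (R * f (R * t))
      = R * ∫ t, g (R * t) := by
        rw [← integral_const_mul]
        congr 1 with t
        simp only [g]
        rw [show -2 * π * (R * t) * (w / R) = -2 * π * t * w by field_simp]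
        ring
    _ = ∫ u, g u := by
        rw [hsub, ← mul_assoc, Complex.ofReal_inv, mul_inv_cancel₀ (by exact_mod_cast hR.ne'),
          one_mul]

theorem Function.Even.fourierInv_eq_fourier {E : Type*} [NormedAddCommGroup E] [NormedSpace ℂ E]
    {f : ℝ → E} (hf : f.Even) : 𝓕⁻ f = 𝓕 f := by
  rw [Real.fourierInv_eq_fourier_comp_neg]
  simp_rw [hf _]

theorem Function.Even.fourier {E : Type*} [NormedAddCommGroup E] [NormedSpace ℂ E]
    {f : ℝ → E} (hf : f.Even) : (𝓕 f).Even := fun w => by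
  rw [← Real.fourierInv_eq_fourier_neg, hf.fourierInv_eq_fourier]

end FourierTransform

theorem tendsto_setAverage_of_continuousAt {α E ι : Type*} [TopologicalSpace α]
    [MeasurableSpace α] {μ : Measure α} [NormedAddCommGroup E] [NormedSpace ℝ E]
    [CompleteSpace E] {g : α → E} {x : α} (hg : ContinuousAt g x) {l : Filter ι} {s : ι → Set α}
    (hs : Tendsto s l (𝓝 x).smallSets) (hsm : ∀ i, MeasurableSet (s i))
    (hμ : ∀ᶠ i in l, μ (s i) ≠ 0 ∧ μ (s i) ≠ ∞)
    (hgi : ∀ᶠ i in l, IntegrableOn g (s i) μ) :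
    Tendsto (fun i => ⨍ y in s i, g y ∂μ) l (𝓝 (g x)) := by
  refine Metric.tendsto_nhds.mpr fun ε hε => ?_
  have hnear := tendsto_smallSets_iff.mp hs _
    (hg.preimage_mem_nhds (Metric.closedBall_mem_nhds (g x) (half_pos hε)))
  filter_upwards [hnear, hμ, hgi] with i hsub hμi hgi
  have hmem := (convex_closedBall (g x) (ε / 2)).set_average_mem Metric.isClosed_closedBall
    hμi.1 hμi.2 (ae_restrict_of_forall_mem (hsm i) hsub) hgi
  exact (Metric.mem_closedBall.mp hmem).trans_lt (half_lt_self hε)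

section SeriesOfIntegrable

variable {α ι E : Type*} [MeasurableSpace α] {μ : Measure α} [Countable ι]
  [NormedAddCommGroup E] {f : ι → α → E}

theorem ae_summable_norm_of_tsum_lintegral_ne_top (hf : ∀ i, AEStronglyMeasurable (f i) μ)
    (h : ∑' i, ∫⁻ a, ‖f i a‖ₑ ∂μ ≠ ∞) : ∀ᵐ a ∂μ, Summable fun i => ‖f i a‖ := by
  rw [← lintegral_tsum fun i => (hf i).enorm] at h
  filter_upwards [ae_lt_top' (AEMeasurable.tsum fun i => (hf i).enorm) h] with a ha
  exact NNReal.summable_coe.mpr (ENNReal.tsum_coe_ne_top_iff_summable.mp ha.ne)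

theorem integrable_tsum_of_tsum_lintegral_ne_top [CompleteSpace E]
    (hf : ∀ i, AEStronglyMeasurable (f i) μ) (h : ∑' i, ∫⁻ a, ‖f i a‖ₑ ∂μ ≠ ∞) :
    Integrable (fun a => ∑' i, f i a) μ := by
  refine ⟨aestronglyMeasurable_of_tendsto_ae atTop
    (fun s : Finset ι => Finset.aestronglyMeasurable_fun_sum s fun i _ => hf i) ?_, ?_⟩
  · filter_upwards [ae_summable_norm_of_tsum_lintegral_ne_top hf h] with a ha
    exact ha.of_norm.hasSum
  · calc ∫⁻ a, ‖∑' i, f i a‖ₑ ∂μ ≤ ∫⁻ a, ∑' i, ‖f i a‖ₑ ∂μ :=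
          lintegral_mono fun a => enorm_tsum_le_tsum_enorm
      _ = ∑' i, ∫⁻ a, ‖f i a‖ₑ ∂μ := lintegral_tsum fun i => (hf i).enorm
      _ < ∞ := h.lt_top

end SeriesOfIntegrable

section Periodization

variable {E : Type*} [NormedAddCommGroup E]

def periodization (F : ℝ → E) (t : ℝ) : E := ∑' n : ℤ, F (t + n)

theorem tsum_setLIntegral_Icc_comp_add_intCast (g : ℝ → ℝ≥0∞) (a : ℝ) :
    ∑' n : ℤ, ∫⁻ t in Icc a (a + 1), g (t + n) = ∫⁻ t, g t := by
  have hshift : ∀ n : ℤ,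
      ∫⁻ t in Icc a (a + 1), g (t + n) = ∫⁻ t in Ioc (a + n) (a + n + 1), g t := fun n => by
      have h := (measurePreserving_add_right volume (n : ℝ)).setLIntegral_comp_preimage_emb
        (measurableEmbedding_addRight _) g (Ioc (a + n) (a + n + 1))
      rwa [preimage_add_const_Ioc, add_sub_cancel_right, add_sub_right_comm, add_sub_cancel_right,
        Measure.restrict_congr_set Ioc_ae_eq_Icc] at h
  rw [tsum_congr hshift, ← lintegral_iUnion (fun _ => measurableSet_Ioc)
    (pairwise_disjoint_Ioc_add_intCast a), iUnion_Ioc_add_intCast, Measure.restrict_univ]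

variable {F : ℝ → E}

theorem MeasureTheory.Integrable.aestronglyMeasurable_comp_add_intCast (hF : Integrable F)
    (s : Set ℝ) (n : ℤ) : AEStronglyMeasurable (fun t => F (t + n)) (volume.restrict s) :=
  (hF.1.comp_quasiMeasurePreserving
    (measurePreserving_add_right volume (n : ℝ)).quasiMeasurePreserving).restrict

theorem MeasureTheory.Integrable.tsum_setLIntegral_Icc_enorm_ne_top (hF : Integrable F)
    (a : ℝ) : ∑' n : ℤ, ∫⁻ t in Icc a (a + 1), ‖F (t + n)‖ₑ ≠ ∞ := by
  rw [tsum_setLIntegral_Icc_comp_add_intCast (fun t => ‖F t‖ₑ)]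
  exact hF.2.ne

theorem MeasureTheory.Integrable.ae_summable_periodization [CompleteSpace E] (hF : Integrable F)
    (a : ℝ) : ∀ᵐ t ∂volume.restrict (Icc a (a + 1)), Summable fun n : ℤ => F (t + n) :=
  (ae_summable_norm_of_tsum_lintegral_ne_top (hF.aestronglyMeasurable_comp_add_intCast _)
    (hF.tsum_setLIntegral_Icc_enorm_ne_top a)).mono fun _ => Summable.of_norm

theorem MeasureTheory.Integrable.integrableOn_periodization [CompleteSpace E] (hF : Integrable F)
    (a : ℝ) : IntegrableOn (periodization F) (Icc a (a + 1)) :=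
  integrable_tsum_of_tsum_lintegral_ne_top (hF.aestronglyMeasurable_comp_add_intCast _)
    (hF.tsum_setLIntegral_Icc_enorm_ne_top a)

theorem MeasureTheory.Integrable.setIntegral_periodization [NormedSpace ℝ E] [CompleteSpace E]
    (hF : Integrable F) (a : ℝ) : ∫ t in Icc a (a + 1), periodization F t = ∫ t, F t := by
  unfold periodization
  rw [integral_tsum (hF.aestronglyMeasurable_comp_add_intCast _)
    (hF.tsum_setLIntegral_Icc_enorm_ne_top a)]
  refine (hF.hasSum_intervalIntegral a).tsum_eq ▸ tsum_congr fun n => ?_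
  rw [integral_Icc_eq_integral_Ioc, ← intervalIntegral.integral_of_le (by linarith),
    intervalIntegral.integral_comp_add_right, add_right_comm]

theorem MeasureTheory.Integrable.setIntegral_periodization_mul_exp {F : ℝ → ℂ}
    (hF : Integrable F) (a : ℝ) (k : ℤ) :
    ∫ t in Icc a (a + 1), periodization F t *
        Complex.exp (-(2 * (π : ℂ)) * Complex.I * (k : ℂ) * (t : ℂ)) = 𝓕 F k := by
  set e : ℝ → ℂ := fun t => Complex.exp (-(2 * (π : ℂ)) * Complex.I * (k : ℂ) * (t : ℂ))
  have he_norm : ∀ t, ‖e t‖ = 1 := fun t => by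
    rw [Complex.norm_exp]
    simp
  have he_periodic : ∀ (t : ℝ) (n : ℤ), e (t + n) = e t := fun t n => by
    have : -(2 * (π : ℂ)) * Complex.I * k * ((t + n : ℝ) : ℂ) =
        -(2 * π) * Complex.I * k * t + (-(k * n) : ℤ) * (2 * π * Complex.I) := by
      push_cast
      ring
    simp only [e, this, Complex.exp_add, Complex.exp_int_mul_two_pi_mul_I, mul_one]
  have hFe : Integrable fun t => F t * e t :=
    hF.mul_bdd (by fun_prop) (ae_of_all _ fun t => (he_norm t).le)
  change ∫ t in Icc a (a + 1), periodization F t * e t = 𝓕 F k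
  calc ∫ t in Icc a (a + 1), periodization F t * e t
      = ∫ t in Icc a (a + 1), periodization (fun t => F t * e t) t := by
        simp only [periodization, he_periodic, tsum_mul_right]
    _ = ∫ t, F t * e t := hFe.setIntegral_periodization a
    _ = 𝓕 F k := by
        rw [Real.fourier_real_eq_integral_exp_smul]
        congr 1 with t
        simp only [e, smul_eq_mul, mul_comm (F t)]
        congr 2
        push_cast
        ring

end Periodization

section CosineTransform

variable {m : ℝ → ℂ}

theorem even_cosTE : (cosTE m).Even := fun t => by simp [cosTE]

theorem integrable_cosTE (h : IntegrableOn (cosT m) (Ioi 0)) : Integrable (cosTE m) :=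
  even_cosTE.integrable_of_integrableOn_Ioi <| h.congr_fun (fun t (ht : 0 < t) => by
    simp [cosTE, abs_of_pos ht]) measurableSet_Ioi

theorem integrable_comp_abs (hm : IntegrableOn m (Ioi 0)) : Integrable fun x => m |x| :=
  Function.Even.integrable_of_integrableOn_Ioi (fun x => by simp) <|
    hm.congr_fun (fun x (hx : 0 < x) => by simp [abs_of_pos hx]) measurableSet_Ioi

theorem fourier_comp_abs (hm : IntegrableOn m (Ioi 0)) (w : ℝ) :
    𝓕 (fun x => m |x|) w = 2 * cosTE m w := by
  rw [Real.fourier_eq, integral_eq_integral_Ioi_add_comp_neg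
    ((Real.fourierIntegral_convergent_iff w).mpr (integrable_comp_abs hm)), cosTE, cosT,
    ← integral_const_mul]
  refine setIntegral_congr_fun measurableSet_Ioi fun x (hx : 0 < x) => ?_
  have hcos : Real.cos (2 * π * x * |w|) = Real.cos (2 * π * x * w) := by
    rcases abs_choice w with h | h <;> simp [h]
  simp only [Circle.smul_def, Real.fourierChar_apply, smul_eq_mul, abs_neg, abs_of_pos hx, hcos,
    Complex.ofReal_cos, Real.inner_apply, Complex.cos]
  push_cast
  ring_nf

theorem Regulated.eq_of_ae_eq_comp_abs {g : ℝ → ℂ} (hreg : Regulated m) (hg : Continuous g)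
    (hae : (fun x => m |x|) =ᵐ[volume] g) {x : ℝ} (hx : 0 ≤ x) : m x = g x := by
  set s : ℝ → Set ℝ := fun δ => {l : ℝ | 0 ≤ l ∧ |l - x| ≤ δ}
  have hs : ∀ δ, s δ = Icc (max 0 (x - δ)) (x + δ) := fun δ => by
    ext l
    simp only [s, mem_ofPred_eq, mem_Icc, abs_le, max_le_iff]
    constructor
    · rintro ⟨h0, h1, h2⟩
      exact ⟨⟨h0, by linarith⟩, by linarith⟩
    · rintro ⟨⟨h0, h1⟩, h2⟩
      exact ⟨h0, by linarith, by linarith⟩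
  have hsmall : Tendsto s (𝓝[>] 0) (𝓝 x).smallSets :=
    ((tendsto_closedBall_smallSets x).mono_left nhdsWithin_le_nhds).smallSets_mono <|
      Eventually.of_forall fun δ l hl => by simpa [Real.dist_eq] using hl.2
  have hvol : ∀ᶠ δ in 𝓝[>] 0, volume (s δ) ≠ 0 ∧ volume (s δ) ≠ ∞ := by
    filter_upwards [self_mem_nhdsWithin] with δ (hδ : 0 < δ)
    rw [hs, Real.volume_Icc]
    exact ⟨ENNReal.ofReal_pos.mpr (by apply sub_pos.mpr (max_lt _ _) <;> linarith) |>.ne',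
      ENNReal.ofReal_ne_top⟩
  have hsm : ∀ δ, MeasurableSet (s δ) := fun δ => by rw [hs]; exact measurableSet_Icc
  have havg : ∀ δ, ⨍ l in s δ, m l = ⨍ l in s δ, g l := fun δ =>
    setAverage_congr_fun (hsm δ) <| by
      filter_upwards [hae] with l hl hls
      rw [← hl, abs_of_nonneg hls.1]
  refine tendsto_nhds_unique ((hreg x hx).congr havg) <|
    tendsto_setAverage_of_continuousAt hg.continuousAt hsmall hsm hvol <|
      Eventually.of_forall fun δ => ?_
  rw [hs]
  exact hg.integrableOn_Icc

theorem Regulated.comp_abs_eq_two_mul_fourier_cosTE (hreg : Regulated m)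
    (hm : IntegrableOn m (Ioi 0)) (hhat : IntegrableOn (cosT m) (Ioi 0)) (y : ℝ) :
    m |y| = 2 * 𝓕 (cosTE m) y := by
  have h𝓕 : 𝓕 (fun x => m |x|) = (2 : ℂ) • cosTE m := funext (fourier_comp_abs hm)
  have hint : Integrable (𝓕 fun x => m |x|) := h𝓕 ▸ (integrable_cosTE hhat).smul (2 : ℂ)
  rw [hreg.eq_of_ae_eq_comp_abs hint.continuous_fourierInv
    ((integrable_comp_abs hm).ae_eq_fourierInv_fourier hint) (abs_nonneg y), h𝓕,
    ← even_cosTE.fourier.apply_abs, ← even_cosTE.fourierInv_eq_fourier]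
  exact congrFun (VectorFourier.fourierIntegral_const_smul _ _ _ (cosTE m) (2 : ℂ)) |y|

end CosineTransform

theorem statement9_general (m : ℝ → ℂ)
    (hreg : Regulated m)
    (hint : IntegrableOn m (Set.Ici 0))
    (hhat : IntegrableOn (cosT m) (Set.Ioi 0))
    (R : ℝ) (hR : 0 < R) :
    (∀ᵐ t ∂(volume.restrict (Set.Icc (-(1 : ℝ) / 2) (1 / 2))),
        Summable (fun n : ℤ => (R : ℂ) * cosTE m (R * (t + (n : ℝ))))) ∧
    IntegrableOn (fun t => ∑' n : ℤ, (R : ℂ) * cosTE m (R * (t + (n : ℝ))))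
      (Set.Icc (-(1 : ℝ) / 2) (1 / 2)) ∧
    ∀ k : ℤ,
      (∫ t in Set.Icc (-(1 : ℝ) / 2) (1 / 2),
          (∑' n : ℤ, (R : ℂ) * cosTE m (R * (t + (n : ℝ)))) *
            Complex.exp (-(2 * (Real.pi : ℂ)) * Complex.I * (k : ℂ) * (t : ℂ))) =
        m (|(k : ℝ)| / R) / 2 := by
  have hF : Integrable fun t => (R : ℂ) * cosTE m (R * t) :=
    ((integrable_cosTE hhat).comp_mul_left' hR.ne').const_mul _
  rw [show Icc (-(1 : ℝ) / 2) (1 / 2) = Icc (-1 / 2) (-1 / 2 + 1) by norm_num]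
  refine ⟨hF.ae_summable_periodization _, hF.integrableOn_periodization _, fun k => ?_⟩
  refine (hF.setIntegral_periodization_mul_exp _ k).trans ?_
  rw [fourier_const_mul_comp_mul_left hR, show |(k : ℝ)| / R = |k / R| by
    rw [abs_div, abs_of_pos hR], hreg.comp_abs_eq_two_mul_fourier_cosTE
    (hint.mono_set Ioi_subset_Ici_self) hhat]
  ring

/-- If `m : [0,∞) → ℂ` is regulated, bounded, integrable, with `m̂` integrable on
`(0,∞)` (extended evenly to `ℝ`), then the periodization
`b_R(t) = Σ_{n∈ℤ} R m̂(R(t+n))` converges absolutely a.e. on `[−1/2,1/2]`, defines an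
integrable function there, and its Fourier coefficients are
`∫_{−1/2}^{1/2} b_R(t) e^{−2πikt} dt = m(|k|/R)/2` for every `k ∈ ℤ`. -/
theorem statement9 (m : ℝ → ℂ)
    (hreg : Regulated m)
    (hbd : ∃ M : ℝ, ∀ l : ℝ, ‖m l‖ ≤ M)
    (hint : IntegrableOn m (Set.Ici 0))
    (hhat : IntegrableOn (cosT m) (Set.Ioi 0))
    (R : ℝ) (hR : 0 < R) :
    (∀ᵐ t ∂(volume.restrict (Set.Icc (-(1 : ℝ) / 2) (1 / 2))),
        Summable (fun n : ℤ => (R : ℂ) * cosTE m (R * (t + (n : ℝ))))) ∧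
    IntegrableOn (fun t => ∑' n : ℤ, (R : ℂ) * cosTE m (R * (t + (n : ℝ))))
      (Set.Icc (-(1 : ℝ) / 2) (1 / 2)) ∧
    ∀ k : ℤ,
      (∫ t in Set.Icc (-(1 : ℝ) / 2) (1 / 2),
          (∑' n : ℤ, (R : ℂ) * cosTE m (R * (t + (n : ℝ)))) *
            Complex.exp (-(2 * (Real.pi : ℂ)) * Complex.I * (k : ℂ) * (t : ℂ))) =
        m (|(k : ℝ)| / R) / 2 :=
  statement9_general m hreg hint hhat R hR
end
end

section
/- Let (X, dist) be a metric space, let E ⊆ X be a finite set, let R > 0, r₀ ≥ 1/R, and D > 0. Let Ê be the set of all x ∈ E for which there exists a closed ball B = B̄(c, r) with 1/R ≤ r ≤ r₀, x ∈ B, and #(E ∩ B) ≥ D·r. Then there exist finitely many pairwise disjoint closed balls B₁ = B̄(c₁, r₁), …, B_N = B̄(c_N, r_N) with 1/R ≤ r_n ≤ r₀ and #(E ∩ B_n) ≥ D·r_n for each n, such that Σ_{n=1}^N r_n ≤ #E / D and Ê ⊆ ⋃_{n=1}^N B̄(c_n, 5 r_n). -/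
/-!
The Vitali covering lemma (with dilation factor `5`) selects, from the family of admissible
balls, a pairwise disjoint subfamily whose `5`-fold dilates cover every admissible ball. Each
admissible ball has positive radius and hence contains a point of `E`, so by disjointness the
subfamily injects into the finite set `E`. Finally `D · Σ rₙ ≤ Σ #(E ∩ Bₙ) ≤ #E`, again by
disjointness.
-/

open Function Metric Set

namespace Set

theorem PairwiseDisjoint.finite_of_inter_nonempty {ι α : Type*} {s : Set ι} {f : ι → Set α}
    {E : Set α} (hE : E.Finite) (hs : s.PairwiseDisjoint f) (hne : ∀ i ∈ s, (E ∩ f i).Nonempty) :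
    s.Finite := by
  have hdisj : s.PairwiseDisjoint fun i => E ∩ f i :=
    hs.mono fun _ => inter_subset_right
  have hunion : (⋃ i ∈ s, E ∩ f i).Finite := hE.subset (iUnion₂_subset fun _ _ => inter_subset_left)
  simpa [sep_eq_self_iff_mem_true.mpr hne] using (hdisj.finite_biUnion_iff.mp hunion).2

theorem sum_ncard_inter_le_ncard {ι α : Type*} [Fintype ι] {E : Set α} (hE : E.Finite)
    {B : ι → Set α} (hB : Pairwise (Disjoint on B)) :
    ∑ i, (E ∩ B i).ncard ≤ E.ncard := by
  have hdisj : Pairwise (Disjoint on fun i => E ∩ B i) :=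
    fun i j hij => (hB hij).mono inter_subset_right inter_subset_right
  rw [← finsum_eq_sum_of_fintype,
    ← ncard_iUnion_of_finite (fun i => hE.subset inter_subset_left) hdisj]
  exact ncard_le_ncard (iUnion_subset fun _ => inter_subset_left) hE

theorem sum_le_ncard_div_of_mul_le_ncard_inter {ι α : Type*} [Fintype ι] {E : Set α}
    (hE : E.Finite) {B : ι → Set α} (hB : Pairwise (Disjoint on B)) {w : ι → ℝ} {D : ℝ}
    (hD : 0 < D) (hw : ∀ i, D * w i ≤ (E ∩ B i).ncard) :
    ∑ i, w i ≤ E.ncard / D := by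
  rw [le_div_iff₀ hD]
  calc (∑ i, w i) * D = ∑ i, D * w i := by rw [Finset.sum_mul]; simp_rw [mul_comm]
    _ ≤ ∑ i, ((E ∩ B i).ncard : ℝ) := Finset.sum_le_sum fun i _ => hw i
    _ ≤ E.ncard := mod_cast sum_ncard_inter_le_ncard hE hB

end Set

theorem statement10_general {X : Type*} [MetricSpace X] (E : Set X) (hE : E.Finite)
    (R r₀ D : ℝ) (hR : 0 < R) (hD : 0 < D) :
    ∃ (N : ℕ) (c : Fin N → X) (r : Fin N → ℝ),
      (∀ n : Fin N, 1 / R ≤ r n ∧ r n ≤ r₀) ∧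
      (∀ n : Fin N, D * r n ≤ ((E ∩ Metric.closedBall (c n) (r n)).ncard : ℝ)) ∧
      (∀ i j : Fin N, i ≠ j →
        Disjoint (Metric.closedBall (c i) (r i)) (Metric.closedBall (c j) (r j))) ∧
      (∑ n : Fin N, r n) ≤ (E.ncard : ℝ) / D ∧
      {x ∈ E | ∃ (cc : X) (rr : ℝ), 1 / R ≤ rr ∧ rr ≤ r₀ ∧ x ∈ Metric.closedBall cc rr ∧
          D * rr ≤ ((E ∩ Metric.closedBall cc rr).ncard : ℝ)} ⊆
        ⋃ n : Fin N, Metric.closedBall (c n) (5 * r n) := by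
  set t : Set (X × ℝ) :=
    {p | 1 / R ≤ p.2 ∧ p.2 ≤ r₀ ∧ D * p.2 ≤ ((E ∩ closedBall p.1 p.2).ncard : ℝ)}
  obtain ⟨u, hut, hdisj, hcover⟩ :=
    Vitali.exists_disjoint_subfamily_covering_enlargement_closedBall t Prod.fst Prod.snd r₀
      (fun _ hp => hp.2.1) 5 (by norm_num)
  have hmeets : ∀ p ∈ t, (E ∩ closedBall p.1 p.2).Nonempty := fun p hp =>
    nonempty_of_ncard_ne_zero <| by
      have : 0 < D * p.2 := mul_pos hD (lt_of_lt_of_le (by positivity) hp.1)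
      exact_mod_cast (this.trans_le hp.2.2).ne'
  have hu : u.Finite := hdisj.finite_of_inter_nonempty hE fun p hp => hmeets p (hut hp)
  have := hu.to_subtype
  set e : Fin (Nat.card u) ≃ u := (Finite.equivFin u).symm
  have he : ∀ n, (e n : X × ℝ) ∈ t := fun n => hut (e n).2
  have hpair : Pairwise (Disjoint on fun n => closedBall (e n : X × ℝ).1 (e n : X × ℝ).2) :=
    hdisj.on_injective (Subtype.val_injective.comp e.injective) fun n => (e n).2
  refine ⟨_, fun n => (e n : X × ℝ).1, fun n => (e n : X × ℝ).2, fun n => ⟨(he n).1, (he n).2.1⟩,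
    fun n => (he n).2.2, fun _ _ hij => hpair hij,
    sum_le_ncard_div_of_mul_le_ncard_inter hE hpair hD fun n => (he n).2.2, ?_⟩
  rintro x ⟨-, cc, rr, h₁, h₂, hx, h₃⟩
  obtain ⟨b, hbu, hsub⟩ := hcover (cc, rr) ⟨h₁, h₂, h₃⟩
  exact mem_iUnion.2 ⟨e.symm ⟨b, hbu⟩, by simp only [e.apply_symm_apply]; exact hsub hx⟩

/-- Vitali-type selection: in a metric space, given a finite set `E`, from the family of
closed balls `B̄(c,r)` with `1/R ≤ r ≤ r₀` containing at least `D·r` points of `E`, one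
can select a finite pairwise disjoint subfamily `B̄(cₙ, rₙ)` with `Σ rₙ ≤ #E / D` whose
`5`-fold dilates cover the set `Ê` of all points of `E` lying in some ball of the family. -/
theorem statement10 {X : Type*} [MetricSpace X] (E : Set X) (hE : E.Finite)
    (R r₀ D : ℝ) (hR : 0 < R) (hr₀ : 1 / R ≤ r₀) (hD : 0 < D) :
    ∃ (N : ℕ) (c : Fin N → X) (r : Fin N → ℝ),
      (∀ n : Fin N, 1 / R ≤ r n ∧ r n ≤ r₀) ∧
      (∀ n : Fin N, D * r n ≤ ((E ∩ Metric.closedBall (c n) (r n)).ncard : ℝ)) ∧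
      (∀ i j : Fin N, i ≠ j →
        Disjoint (Metric.closedBall (c i) (r i)) (Metric.closedBall (c j) (r j))) ∧
      (∑ n : Fin N, r n) ≤ (E.ncard : ℝ) / D ∧
      {x ∈ E | ∃ (cc : X) (rr : ℝ), 1 / R ≤ rr ∧ rr ≤ r₀ ∧ x ∈ Metric.closedBall cc rr ∧
          D * rr ≤ ((E ∩ Metric.closedBall cc rr).ncard : ℝ)} ⊆
        ⋃ n : Fin N, Metric.closedBall (c n) (5 * r n) :=
  statement10_general E hE R r₀ D hR hD
end

section
/- Let d ≥ 1 and let p : ℝ^d ∖ {0} → ℝ be twice continuously differentiable and positively homogeneous of degree 1. Let ε > 0 and let ξ : (−ε, ε) → ℝ^d ∖ {0} be a twice differentiable curve with p(ξ(a)) = 1 for all a. Then ⟨∇²(p²)(ξ(0)) ξ(0), ξ''(0)⟩ = −⟨∇²(p²)(ξ(0)) ξ'(0), ξ'(0)⟩. -/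
/-!
Put `q = p²`, which is homogeneous of degree 2, so that `Dq` is homogeneous of degree 1 and
Euler's relation for `Dq` reads `D²q(x) x = Dq(x)`. Differentiating `q(ξ(a)) = 1` twice gives
`D²q(ξ)(ξ', ξ') + Dq(ξ) ξ'' = 0`, and substituting Euler's relation at `x = ξ(0)` turns the
second term into `D²q(ξ)(ξ, ξ'')`.
-/

open Set Filter Topology

section Homogeneous

variable {E F : Type*} [NormedAddCommGroup E] [NormedSpace ℝ E]
  [NormedAddCommGroup F] [NormedSpace ℝ F]

theorem fderiv_apply_self_of_homogeneous {g : E → F} {x : E} {k : ℕ}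
    (hg : DifferentiableAt ℝ g x) (hhom : ∀ᶠ s in 𝓝 (1 : ℝ), g (s • x) = s ^ k • g x) :
    fderiv ℝ g x x = (k : ℝ) • g x := by
  have hray : HasDerivAt (fun s : ℝ => s • x) x 1 := by
    simpa using (hasDerivAt_id (1 : ℝ)).smul_const x
  have hg1 : HasFDerivAt g (fderiv ℝ g x) ((1 : ℝ) • x) := by
    rw [one_smul]
    exact hg.hasFDerivAt
  have hcomp : HasDerivAt (fun s : ℝ => g (s • x)) (fderiv ℝ g x x) 1 :=
    hg1.comp_hasDerivAt 1 hray
  have hpow : HasDerivAt (fun s : ℝ => s ^ k • g x) ((k : ℝ) • g x) 1 := by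
    simpa using (hasDerivAt_pow k (1 : ℝ)).smul_const (g x)
  exact hcomp.unique (hpow.congr_of_eventuallyEq hhom)

theorem fderiv_smul_of_homogeneous {f : E → F} {x : E} {s : ℝ} {k : ℕ} (hs : s ≠ 0)
    (hfs : DifferentiableAt ℝ f (s • x)) (hf : DifferentiableAt ℝ f x)
    (hhom : ∀ᶠ y in 𝓝 x, f (s • y) = s ^ (k + 1) • f y) :
    fderiv ℝ f (s • x) = s ^ k • fderiv ℝ f x := by
  have hscale : HasFDerivAt (fun y : E => s • y) (s • ContinuousLinearMap.id ℝ E) x :=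
    (hasFDerivAt_id x).const_smul s
  have hcomp : HasFDerivAt (fun y => f (s • y)) (s • fderiv ℝ f (s • x)) x := by
    have h := hfs.hasFDerivAt.comp x hscale
    rwa [ContinuousLinearMap.comp_smul, ContinuousLinearMap.comp_id] at h
  have hhom' : HasFDerivAt (fun y => f (s • y)) (s ^ (k + 1) • fderiv ℝ f x) x :=
    (hf.hasFDerivAt.const_smul _).congr_of_eventuallyEq hhom
  apply smul_right_injective _ hs
  simp only [smul_smul, ← pow_succ']
  exact hcomp.unique hhom'

theorem fderiv_apply_deriv_eq_zero_of_eventually_const {g : E → F} {γ : ℝ → E} {a : ℝ} {c : F}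
    (hg : DifferentiableAt ℝ g (γ a)) (hγ : DifferentiableAt ℝ γ a)
    (hc : ∀ᶠ b in 𝓝 a, g (γ b) = c) :
    fderiv ℝ g (γ a) (deriv γ a) = 0 :=
  (hg.hasFDerivAt.comp_hasDerivAt a hγ.hasDerivAt).unique
    ((hasDerivAt_const a c).congr_of_eventuallyEq hc)

theorem fderiv_fderiv_add_fderiv_deriv_deriv_eq_zero {g : E → F} {γ : ℝ → E} {t : ℝ} {c : F}
    (hg : ∀ᶠ a in 𝓝 t, DifferentiableAt ℝ g (γ a)) (hγ : ∀ᶠ a in 𝓝 t, DifferentiableAt ℝ γ a)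
    (hg' : DifferentiableAt ℝ (fderiv ℝ g) (γ t)) (hγ' : DifferentiableAt ℝ (deriv γ) t)
    (hc : ∀ᶠ a in 𝓝 t, g (γ a) = c) :
    fderiv ℝ (fderiv ℝ g) (γ t) (deriv γ t) (deriv γ t) + fderiv ℝ g (γ t) (deriv (deriv γ) t)
      = 0 := by
  have hfirst : ∀ᶠ a in 𝓝 t, fderiv ℝ g (γ a) (deriv γ a) = 0 := by
    filter_upwards [hg, hγ, hc.eventually_nhds] with a hga hγa hca
    exact fderiv_apply_deriv_eq_zero_of_eventually_const hga hγa hca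
  have hsecond : HasDerivAt (fun a => fderiv ℝ g (γ a) (deriv γ a))
      (fderiv ℝ (fderiv ℝ g) (γ t) (deriv γ t) (deriv γ t)
        + fderiv ℝ g (γ t) (deriv (deriv γ) t)) t :=
    (hg'.hasFDerivAt.comp_hasDerivAt t hγ.self_of_nhds.hasDerivAt).clm_apply hγ'.hasDerivAt
  exact hsecond.unique ((hasDerivAt_const t 0).congr_of_eventuallyEq hfirst)

end Homogeneous

theorem statement14_general (d : ℕ)
    (p : EuclideanSpace ℝ (Fin d) → ℝ)
    (hp : ContDiffOn ℝ 2 p {ξ : EuclideanSpace ℝ (Fin d) | ξ ≠ 0})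
    (hhom : ∀ s : ℝ, 0 < s → ∀ ξ : EuclideanSpace ℝ (Fin d), ξ ≠ 0 →
      p (s • ξ) = s * p ξ)
    (ε : ℝ) (hε : 0 < ε)
    (ξ : ℝ → EuclideanSpace ℝ (Fin d))
    (hne : ∀ a ∈ Set.Ioo (-ε) ε, ξ a ≠ 0)
    (hdiff1 : ∀ a ∈ Set.Ioo (-ε) ε, DifferentiableAt ℝ ξ a)
    (hdiff2 : ∀ a ∈ Set.Ioo (-ε) ε, DifferentiableAt ℝ (deriv ξ) a)
    (hval : ∀ a ∈ Set.Ioo (-ε) ε, p (ξ a) = 1) :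
    fderiv ℝ (fderiv ℝ (fun x => (p x) ^ 2)) (ξ 0) (ξ 0) (deriv (deriv ξ) 0) =
      -(fderiv ℝ (fderiv ℝ (fun x => (p x) ^ 2)) (ξ 0) (deriv ξ 0) (deriv ξ 0)) := by
  set q : EuclideanSpace ℝ (Fin d) → ℝ := fun x => p x ^ 2
  have hnhds : ∀ {x : EuclideanSpace ℝ (Fin d)}, x ≠ 0 → {y | y ≠ 0} ∈ 𝓝 x :=
    fun hx => isOpen_compl_singleton.mem_nhds hx
  have hq : ∀ {x}, x ≠ 0 → ContDiffAt ℝ 2 q x := fun hx => (hp.pow 2).contDiffAt (hnhds hx)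
  have hq1 : ∀ {x}, x ≠ 0 → DifferentiableAt ℝ q x :=
    fun hx => (hq hx).differentiableAt (by norm_num)
  have hq2 : ∀ {x}, x ≠ 0 → DifferentiableAt ℝ (fderiv ℝ q) x :=
    fun hx => ((hq hx).fderiv_right (m := 1) le_rfl).differentiableAt one_ne_zero
  have hqhom : ∀ s : ℝ, 0 < s → ∀ x, x ≠ 0 → q (s • x) = s ^ (1 + 1) • q x := by
    intro s hs x hx
    simp only [q, hhom s hs x hx, smul_eq_mul]
    ring
  have hx0 : ξ 0 ≠ 0 := hne 0 ⟨neg_lt_zero.2 hε, hε⟩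
  have hEuler : fderiv ℝ (fderiv ℝ q) (ξ 0) (ξ 0) = fderiv ℝ q (ξ 0) := by
    have hDhom : ∀ᶠ s in 𝓝 (1 : ℝ), fderiv ℝ q (s • ξ 0) = s ^ 1 • fderiv ℝ q (ξ 0) := by
      filter_upwards [lt_mem_nhds one_pos] with s hs
      have hsx : s • ξ 0 ≠ 0 := smul_ne_zero hs.ne' hx0
      exact fderiv_smul_of_homogeneous hs.ne' (hq1 hsx) (hq1 hx0)
        (eventually_of_mem (hnhds hx0) (hqhom s hs))
    simpa using fderiv_apply_self_of_homogeneous (hq2 hx0) hDhom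
  have hI : ∀ᶠ a in 𝓝 (0 : ℝ), a ∈ Ioo (-ε) ε := Ioo_mem_nhds (neg_lt_zero.2 hε) hε
  have hlevel := fderiv_fderiv_add_fderiv_deriv_deriv_eq_zero (c := (1 : ℝ))
    (hI.mono fun a ha => hq1 (hne a ha)) (hI.mono hdiff1) (hq2 hx0) (hdiff2 0 hI.self_of_nhds)
    (hI.mono fun a ha => by simp [q, hval a ha])
  rw [hEuler]
  linarith

/-- Second-variation identity along a curve on the unit level set of a positively
1-homogeneous `C²` function `p` on `ℝ^d ∖ {0}`: if `p(ξ(a)) = 1` on `(−ε,ε)` then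
`⟨∇²(p²)(ξ(0)) ξ(0), ξ''(0)⟩ = −⟨∇²(p²)(ξ(0)) ξ'(0), ξ'(0)⟩`. -/
theorem statement14 (d : ℕ) (hd : 1 ≤ d)
    (p : EuclideanSpace ℝ (Fin d) → ℝ)
    (hp : ContDiffOn ℝ 2 p {ξ : EuclideanSpace ℝ (Fin d) | ξ ≠ 0})
    (hhom : ∀ s : ℝ, 0 < s → ∀ ξ : EuclideanSpace ℝ (Fin d), ξ ≠ 0 →
      p (s • ξ) = s * p ξ)
    (ε : ℝ) (hε : 0 < ε)
    (ξ : ℝ → EuclideanSpace ℝ (Fin d))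
    (hne : ∀ a ∈ Set.Ioo (-ε) ε, ξ a ≠ 0)
    (hdiff1 : ∀ a ∈ Set.Ioo (-ε) ε, DifferentiableAt ℝ ξ a)
    (hdiff2 : ∀ a ∈ Set.Ioo (-ε) ε, DifferentiableAt ℝ (deriv ξ) a)
    (hval : ∀ a ∈ Set.Ioo (-ε) ε, p (ξ a) = 1) :
    fderiv ℝ (fderiv ℝ (fun x => (p x) ^ 2)) (ξ 0) (ξ 0) (deriv (deriv ξ) 0) =
      -(fderiv ℝ (fderiv ℝ (fun x => (p x) ^ 2)) (ξ 0) (deriv ξ 0) (deriv ξ 0)) :=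
  statement14_general d p hp hhom ε hε ξ hne hdiff1 hdiff2 hval
end
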